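/- arXiv:1412.3848 — 5 statements merged into one kernel-verified Lean document; each statement's English description precedes it below -/
import Mathlib

section
/- Let G be a group acting by automorphisms on a tree T, let x₀ be a vertex, and for a vertex x let 𝟙_x ∈ ℓ²(oriented edges of T) be the characteristic function of the set of oriented edges pointing towards x (i.e., edges e with d(e₊, x) < d(e₋, x)). Define b(g) = 𝟙_{g·x₀} − 𝟙_{x₀}. Then b(g) ∈ ℓ²(E) and ‖b(g)‖² = 2·d(g·x₀, x₀) for every g ∈ G. -/
open SimpleGraph

open Classical in
/-- `towardInd T x` is the characteristic function (on oriented edges, modeled as adjacent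
ordered pairs of vertices) of the set of oriented edges pointing towards the vertex `x`,
i.e. pairs `(p.1, p.2)` with `T.Adj p.1 p.2` and `d(p.2, x) < d(p.1, x)`. -/
noncomputable def towardInd {V : Type*} (T : SimpleGraph V) (x : V) : V × V → ℝ :=
  fun p => if T.Adj p.1 p.2 ∧ T.dist p.2 x < T.dist p.1 x then 1 else 0

/-!
For adjacent `u, v` of a tree, `𝟙_v - 𝟙_u` is `±1` on the two orientations of the edge `{u, v}`
and `0` elsewhere, because no other edge separates `u` from `v`. Walking from `y` to its
neighbour `v` on the geodesic towards `x`, the increment `𝟙_v - 𝟙_y` lives on an edge where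
`𝟙_x` already agrees with `𝟙_v`, so the squared norms add: each edge of the geodesic
contributes `2`.
-/

namespace SimpleGraph

variable {V : Type*} {G : SimpleGraph V}

theorem Walk.dist_le_length_of_mem_support_left {u v w : V} (p : G.Walk u v)
    (hw : w ∈ p.support) : G.dist u w ≤ p.length := by
  classical
  exact (dist_le _).trans (p.length_takeUntil_le_length hw)

theorem Walk.dist_le_length_of_mem_support_right {u v w : V} (p : G.Walk u v)
    (hw : w ∈ p.support) : G.dist w v ≤ p.length := by
  classical
  exact (dist_le _).trans (p.length_dropUntil_le_length hw)

theorem Connected.exists_adj_dist_eq_of_dist_eq_add_one (hG : G.Connected) {x y : V} {n : ℕ}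
    (h : G.dist y x = n + 1) : ∃ v, G.Adj y v ∧ G.dist v x = n := by
  obtain ⟨p, hp⟩ := hG.exists_walk_length_eq_dist y x
  cases p with
  | nil => simp at h
  | @cons _ v _ hyv r =>
    refine ⟨v, hyv, le_antisymm ?_ ?_⟩
    · have := dist_le r
      simp only [Walk.length_cons] at hp
      omega
    · have := hG.dist_triangle (u := y) (v := v) (w := x)
      rw [dist_eq_one_iff_adj.mpr hyv] at this
      omega

/-- The geodesic from `a` to `u` extended by `v`, and the geodesic from `b` to `v` preceded by `a`,
are both paths from `a` to `v`, hence equal; so `b` lies on the first one, which forces `b = v`. -/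
theorem IsTree.eq_of_adj_of_dist_cross (hT : G.IsTree) {u v a b : V} (huv : G.Adj u v)
    (hab : G.Adj a b) (ha : G.dist a v = G.dist a u + 1) (hb : G.dist b u = G.dist b v + 1) :
    a = u ∧ b = v := by
  have hbv : G.dist b v = G.dist a u := by
    have hav := hT.connected.dist_triangle (u := a) (v := b) (w := v)
    have hbu := hT.connected.dist_triangle (u := b) (v := a) (w := u)
    rw [dist_eq_one_iff_adj.mpr hab] at hav
    rw [dist_eq_one_iff_adj.mpr hab.symm] at hbu
    omega
  obtain ⟨q, hq, hql⟩ := hT.connected.exists_path_of_dist a u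
  obtain ⟨r, hr, hrl⟩ := hT.connected.exists_path_of_dist b v
  have hvq : v ∉ q.support := fun h => by
    have := q.dist_le_length_of_mem_support_left h; omega
  have har : a ∉ r.support := fun h => by
    have := r.dist_le_length_of_mem_support_right h; omega
  have hpaths : q.concat huv = Walk.cons hab r := congrArg Subtype.val
    ((hT.isAcyclic.subsingleton_path a v).elim ⟨_, hq.concat hvq huv⟩ ⟨_, hr.cons har⟩)
  have hbq : b ∈ (q.concat huv).support := by simp [hpaths]
  rw [Walk.support_concat, List.mem_append, List.mem_singleton] at hbq
  rcases hbq with hbq | rfl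
  · have := q.dist_le_length_of_mem_support_right hbq; omega
  · exact ⟨hT.connected.dist_eq_zero_iff.mp (by simp at hbv; omega), rfl⟩

end SimpleGraph

section towardInd

variable {V : Type*} {T : SimpleGraph V}

theorem towardInd_eq_of_adj (hT : T.IsTree) {u v : V} (huv : T.Adj u v) {p : V × V}
    (hpuv : p ≠ (u, v)) (hpvu : p ≠ (v, u)) : towardInd T v p = towardInd T u p := by
  classical
  obtain ⟨a, b⟩ := p
  by_cases hab : T.Adj a b
  · have hside : T.dist b v < T.dist a v ↔ T.dist b u < T.dist a u := by
      rcases hT.dist_eq_dist_add_one_of_adj a huv with ha | ha <;>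
        rcases hT.dist_eq_dist_add_one_of_adj b huv with hb | hb
      · omega
      · obtain ⟨rfl, rfl⟩ := hT.eq_of_adj_of_dist_cross huv.symm hab ha hb
        exact absurd rfl hpvu
      · obtain ⟨rfl, rfl⟩ := hT.eq_of_adj_of_dist_cross huv hab ha hb
        exact absurd rfl hpuv
      · omega
    exact if_congr (and_congr_right fun _ => hside) rfl rfl
  · simp [towardInd, hab]

theorem hasSum_sq_towardInd_sub_of_adj (hT : T.IsTree) {u v : V} (huv : T.Adj u v) :
    HasSum (fun p => (towardInd T v p - towardInd T u p) ^ 2) 2 := by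
  classical
  have hne : (u, v) ≠ (v, u) := by simp [huv.ne]
  have hzero : ∀ p ∉ ({(u, v), (v, u)} : Finset (V × V)),
      (towardInd T v p - towardInd T u p) ^ 2 = 0 := fun p hp => by
    simp only [Finset.mem_insert, Finset.mem_singleton, not_or] at hp
    rw [towardInd_eq_of_adj hT huv hp.1 hp.2, sub_self, sq, mul_zero]
  convert hasSum_sum_of_ne_finset_zero (L := .unconditional _) hzero using 1
  rw [Finset.sum_pair hne]
  norm_num [towardInd, huv, huv.symm, dist_eq_one_iff_adj.mpr huv,
    dist_eq_one_iff_adj.mpr huv.symm]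

theorem sq_towardInd_sub_eq_add (hT : T.IsTree) {x y v : V} (hyv : T.Adj y v)
    (hvx : T.dist v x < T.dist y x) (p : V × V) :
    (towardInd T x p - towardInd T y p) ^ 2 =
      (towardInd T x p - towardInd T v p) ^ 2 + (towardInd T v p - towardInd T y p) ^ 2 := by
  suffices h : towardInd T x p = towardInd T v p ∨ towardInd T v p = towardInd T y p by
    rcases h with h | h <;> rw [h] <;> ring
  by_cases hpyv : p = (y, v)
  · left
    simp [hpyv, towardInd, hyv, hvx, dist_eq_one_iff_adj.mpr hyv]
  by_cases hpvy : p = (v, y)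
  · left
    simp [hpvy, towardInd, not_lt.mpr hvx.le]
  · exact .inr (towardInd_eq_of_adj hT hyv hpyv hpvy)

theorem hasSum_sq_towardInd_sub (hT : T.IsTree) (x y : V) :
    HasSum (fun p => (towardInd T x p - towardInd T y p) ^ 2) (2 * T.dist x y) := by
  obtain ⟨n, hn⟩ : ∃ n, T.dist y x = n := ⟨_, rfl⟩
  induction n generalizing y with
  | zero =>
    obtain rfl : y = x := hT.connected.dist_eq_zero_iff.mp hn
    simp [hasSum_zero]
  | succ n ih =>
    obtain ⟨v, hyv, hvx⟩ := hT.connected.exists_adj_dist_eq_of_dist_eq_add_one hn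
    rw [funext (sq_towardInd_sub_eq_add hT hyv (by omega)), dist_comm, hn]
    convert (ih v hvx).add (hasSum_sq_towardInd_sub_of_adj hT hyv) using 1
    rw [dist_comm, hvx]
    push_cast
    ring

end towardInd

theorem stmt1_general {V : Type*} (T : SimpleGraph V) (hT : T.IsTree) {G : Type*} [Group G]
    [MulAction G V] (x₀ : V) (g : G) :
    Summable (fun p : V × V => (towardInd T (g • x₀) p - towardInd T x₀ p) ^ 2) ∧
    ∑' p : V × V, (towardInd T (g • x₀) p - towardInd T x₀ p) ^ 2
      = 2 * (T.dist (g • x₀) x₀ : ℝ) :=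
  have h := hasSum_sq_towardInd_sub hT (g • x₀) x₀
  ⟨h.summable, h.tsum_eq⟩

/-- The Haagerup cocycle `b(g) = 𝟙_{g·x₀} − 𝟙_{x₀}` is square-summable, with
`‖b(g)‖² = 2·d(g·x₀, x₀)`. -/
theorem stmt1 {V : Type*} (T : SimpleGraph V) (hT : T.IsTree) {G : Type*} [Group G]
    [MulAction G V] (hact : ∀ (g : G) (a b : V), T.Adj a b ↔ T.Adj (g • a) (g • b))
    (x₀ : V) (g : G) :
    Summable (fun p : V × V => (towardInd T (g • x₀) p - towardInd T x₀ p) ^ 2) ∧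
    ∑' p : V × V, (towardInd T (g • x₀) p - towardInd T x₀ p) ^ 2
      = 2 * (T.dist (g • x₀) x₀ : ℝ) :=
  stmt1_general T hT x₀ g
end

section
/- Let H be a finite index subgroup of a discrete group G, and let G act by affine isometries on a Hilbert space M (with linear part a unitary representation). If there is a sequence of vectors (v_k) in M with ‖α(h)v_k − v_k‖ → 0 for every h ∈ H, then there is a sequence of vectors (w_k) in M with ‖α(g)w_k − w_k‖ → 0 for every g ∈ G. Consequently, the restriction map on first reduced cohomology, Rest: H̄¹(G, M) → H̄¹(H, M), is injective. -/
open Filter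

/-- Averaging lemma: there is a family `hf g c` of elements of `H` and an averaging map
`avg : M → M` such that whenever `v` is moved by less than `ε` by `α(hf g c)` for all cosets
`c`, the average `avg v` is moved by less than `ε` by `α(g)`. -/
theorem stmt5_aux {G M : Type*} [Group G] [NormedAddCommGroup M] [InnerProductSpace ℂ M]
    (H : Subgroup G) [H.FiniteIndex]
    (π : G →* (M ≃ₗᵢ[ℂ] M)) (b : G → M)
    (hb : ∀ g h : G, b (g * h) = π g (b h) + b g) :
    ∃ (hf : G → G ⧸ H → H) (avg : M → M),
      ∀ (g : G) (v : M) (ε : ℝ), 0 < ε →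
        (∀ c : G ⧸ H, ‖π ((hf g c : G)) v + b ((hf g c : G)) - v‖ < ε) →
        ‖π g (avg v) + b g - avg v‖ < ε := by
  classical
  haveI : Finite (G ⧸ H) := H.finite_quotient_of_finiteIndex
  haveI : Fintype (G ⧸ H) := Fintype.ofFinite _
  set N := Fintype.card (G ⧸ H) with hNdef
  have hN : 0 < N := Fintype.card_pos
  set r : G ⧸ H → G := fun c => c.out with hr
  have hrmk : ∀ c : G ⧸ H, QuotientGroup.mk (r c) = c := fun c => QuotientGroup.out_eq' c
  have hmem : ∀ (g : G) (c : G ⧸ H), (r (g • c))⁻¹ * (g * r c) ∈ H := by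
    intro g c
    have h2 : (QuotientGroup.mk (g * r c) : G ⧸ H) = g • c := by
      have := MulAction.Quotient.smul_mk H g (r c)
      rw [smul_eq_mul] at this
      rw [← this, hrmk]
    exact QuotientGroup.eq.mp ((hrmk (g • c)).trans h2.symm)
  refine ⟨fun g c => ⟨(r (g • c))⁻¹ * (g * r c), hmem g c⟩,
    fun v => (N : ℂ)⁻¹ • ∑ c : G ⧸ H, (π (r c) v + b (r c)), ?_⟩
  intro g v ε hε hsmall
  set hf : G ⧸ H → G := fun c => (r (g • c))⁻¹ * (g * r c) with hhf
  have hgr : ∀ c : G ⧸ H, g * r c = r (g • c) * hf c := by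
    intro c; simp [hhf, mul_assoc]
  -- α(g') v for group element g'
  set A : G ⧸ H → M := fun c => π (r c) v + b (r c) with hA
  set w : M := (N : ℂ)⁻¹ • ∑ c : G ⧸ H, A c with hw
  have key : ∀ c : G ⧸ H, π g (A c) + b g =
      π (r (g • c)) ((π (hf c) v + b (hf c)) - v) + A (g • c) := by
    intro c
    have e1 : π g (A c) + b g = π (g * r c) v + b (g * r c) := by
      simp only [hA, map_add, map_mul, hb g (r c)]
      simp [LinearIsometryEquiv.map_add]
      abel
    rw [e1, hgr c, hb (r (g • c)) (hf c)]
    simp only [map_mul, hA]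
    simp [LinearIsometryEquiv.map_sub, LinearIsometryEquiv.map_add]
    abel
  have hsum_reindex : ∑ c : G ⧸ H, A (g • c) = ∑ c : G ⧸ H, A c := by
    exact Equiv.sum_comp (MulAction.toPerm g) A
  have hbg : (N : ℂ)⁻¹ • ∑ _c : G ⧸ H, b g = b g := by
    rw [Finset.sum_const, Finset.card_univ, ← hNdef, ← Nat.cast_smul_eq_nsmul ℂ, smul_smul,
      inv_mul_cancel₀ (by exact_mod_cast hN.ne'), one_smul]
  have main : π g w + b g - w =
      (N : ℂ)⁻¹ • ∑ c : G ⧸ H, π (r (g • c)) ((π (hf c) v + b (hf c)) - v) := by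
    have e2 : π g w = (N : ℂ)⁻¹ • ∑ c : G ⧸ H, π g (A c) := by
      rw [hw, LinearIsometryEquiv.map_smul, map_sum]
    calc π g w + b g - w
        = (N : ℂ)⁻¹ • ∑ c : G ⧸ H, π g (A c) + (N : ℂ)⁻¹ • ∑ _c : G ⧸ H, b g
          - (N : ℂ)⁻¹ • ∑ c : G ⧸ H, A (g • c) := by rw [e2, hbg, hw, hsum_reindex]
      _ = (N : ℂ)⁻¹ • ∑ c : G ⧸ H, ((π g (A c) + b g) - A (g • c)) := by
          rw [← smul_add, ← smul_sub, ← Finset.sum_add_distrib, ← Finset.sum_sub_distrib]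
      _ = (N : ℂ)⁻¹ • ∑ c : G ⧸ H, π (r (g • c)) ((π (hf c) v + b (hf c)) - v) := by
          congr 1; refine Finset.sum_congr rfl fun c _ => ?_
          rw [key c]; abel
  rw [main, norm_smul]
  have hnormN : ‖(N : ℂ)⁻¹‖ = (N : ℝ)⁻¹ := by
    rw [norm_inv]; norm_num
  rw [hnormN]
  have hsumlt : ‖∑ c : G ⧸ H, π (r (g • c)) ((π (hf c) v + b (hf c)) - v)‖ < N * ε := by
    calc ‖∑ c : G ⧸ H, π (r (g • c)) ((π (hf c) v + b (hf c)) - v)‖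
        ≤ ∑ c : G ⧸ H, ‖π (r (g • c)) ((π (hf c) v + b (hf c)) - v)‖ := norm_sum_le _ _
      _ = ∑ c : G ⧸ H, ‖π (hf c) v + b (hf c) - v‖ := by
          refine Finset.sum_congr rfl fun c _ => ?_
          exact (π (r (g • c))).norm_map _
      _ < ∑ _c : G ⧸ H, ε := by
          refine Finset.sum_lt_sum_of_nonempty Finset.univ_nonempty fun c _ => hsmall c
      _ = N * ε := by rw [Finset.sum_const, Finset.card_univ, nsmul_eq_mul]
  calc (N : ℝ)⁻¹ * ‖∑ c : G ⧸ H, π (r (g • c)) ((π (hf c) v + b (hf c)) - v)‖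
      < (N : ℝ)⁻¹ * (N * ε) := by
        exact mul_lt_mul_of_pos_left hsumlt (by positivity)
    _ = ε := by field_simp

/-- Let `H` be a finite index subgroup of `G`, `π` a unitary representation of `G` on a
Hilbert space `M`, `b` a 1-cocycle and `α(g)v = π(g)v + b(g)` the affine action. If there is a
sequence of vectors almost fixed by `α(h)` for each `h ∈ H`, then there is a sequence of vectors
almost fixed by `α(g)` for each `g ∈ G`. Consequently the restriction map on reduced
1-cohomology is injective: if `b|_H` lies in the closure of the coboundaries of `H`
(pointwise topology), then `b` lies in the closure of the coboundaries of `G`. -/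
theorem stmt5 {G M : Type*} [Group G] [NormedAddCommGroup M] [InnerProductSpace ℂ M]
    [CompleteSpace M] (H : Subgroup G) [H.FiniteIndex]
    (π : G →* (M ≃ₗᵢ[ℂ] M)) (b : G → M)
    (hb : ∀ g h : G, b (g * h) = π g (b h) + b g) :
    ((∀ v : ℕ → M,
        (∀ h : H, Tendsto (fun k => ‖π (h : G) (v k) + b (h : G) - v k‖) atTop (nhds 0)) →
        ∃ w : ℕ → M, ∀ g : G, Tendsto (fun k => ‖π g (w k) + b g - w k‖) atTop (nhds 0)))
    ∧ ((fun h : H => b (h : G)) ∈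
          closure {f : H → M | ∃ m : M, f = fun h : H => π (h : G) m - m} →
        b ∈ closure {f : G → M | ∃ m : M, f = fun g : G => π g m - m}) := by
  classical
  haveI : Finite (G ⧸ H) := H.finite_quotient_of_finiteIndex
  haveI : Fintype (G ⧸ H) := Fintype.ofFinite _
  obtain ⟨hf, avg, havg⟩ := stmt5_aux H π b hb
  constructor
  · -- Part 1: averaging an almost-fixed sequence
    intro v hv
    refine ⟨fun k => avg (v k), fun g => ?_⟩
    rw [Metric.tendsto_atTop]
    intro ε hε
    have hev : ∀ᶠ k in atTop, ∀ c : G ⧸ H,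
        ‖π ((hf g c : G)) (v k) + b ((hf g c : G)) - v k‖ < ε := by
      rw [eventually_all]
      intro c
      exact (hv (hf g c)).eventually (gt_mem_nhds hε)
    obtain ⟨K, hK⟩ := hev.exists_forall_of_atTop
    refine ⟨K, fun k hk => ?_⟩
    rw [Real.dist_0_eq_abs, abs_of_nonneg (norm_nonneg _)]
    exact havg g (v k) ε hε (hK k hk)
  · -- Part 2: restriction on reduced cohomology is injective
    intro hcl
    have hget : ∀ (F : Finset H) (δ : ℝ), 0 < δ →
        ∃ m : M, ∀ h ∈ F, ‖(π (h : G) m - m) - b (h : G)‖ < δ := by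
      intro F δ hδ
      have hopen : IsOpen (Set.pi (↑F : Set H) fun h => Metric.ball (b (h : G)) δ) :=
        isOpen_set_pi F.finite_toSet fun h _ => Metric.isOpen_ball
      have hmem : (fun h : H => b (h : G)) ∈
          Set.pi (↑F : Set H) fun h => Metric.ball (b (h : G)) δ := by
        intro h _; exact Metric.mem_ball_self hδ
      obtain ⟨f, hf1, m, hm⟩ := (mem_closure_iff.mp hcl) _ hopen hmem
      refine ⟨m, fun h hh => ?_⟩
      have := hf1 h (by exact_mod_cast hh)
      rw [hm] at this
      rw [← dist_eq_norm]
      exact this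
    rw [mem_closure_iff_nhds]
    intro t ht
    rw [nhds_pi, Filter.mem_pi'] at ht
    obtain ⟨I, tg, htg, hsub⟩ := ht
    choose ε hε hball using fun g => Metric.mem_nhds_iff.mp (htg g)
    by_cases hI : I.Nonempty
    · set δ : ℝ := I.inf' hI ε with hδdef
      have hδ : 0 < δ := (Finset.lt_inf'_iff hI).mpr fun g _ => hε g
      set F : Finset H := I.biUnion (fun g => Finset.image (fun c => hf g c) Finset.univ)
        with hF
      obtain ⟨m, hm⟩ := hget F δ hδ
      set v : M := -m with hv
      have hvsmall : ∀ g ∈ I, ∀ c : G ⧸ H,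
          ‖π ((hf g c : G)) v + b ((hf g c : G)) - v‖ < δ := by
        intro g hg c
        have hmemF : hf g c ∈ F := by
          rw [hF]; exact Finset.mem_biUnion.mpr ⟨g, hg,
            Finset.mem_image.mpr ⟨c, Finset.mem_univ c, rfl⟩⟩
        have := hm _ hmemF
        have heq : π ((hf g c : G)) v + b ((hf g c : G)) - v
            = -((π ((hf g c : G)) m - m) - b ((hf g c : G))) := by
          rw [hv]; simp [map_neg]; abel
        rw [heq, norm_neg]
        exact this
      set w : M := avg v with hwdef
      refine ⟨fun g => π g (-w) - (-w), hsub ?_, ⟨-w, rfl⟩⟩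
      intro g hg
      apply hball g
      rw [Metric.mem_ball, dist_eq_norm]
      have heq : π g (-w) - (-w) - b g = -(π g w + b g - w) := by
        simp [map_neg]; abel
      rw [heq, norm_neg]
      have hδle : δ ≤ ε g := Finset.inf'_le _ hg
      exact havg g v (ε g) (hε g) fun c => lt_of_lt_of_le (hvsmall g hg c) hδle
    · rw [Finset.not_nonempty_iff_eq_empty] at hI
      refine ⟨fun g => π g (0 : M) - 0, hsub ?_, ⟨0, rfl⟩⟩
      intro g hg
      simp [hI] at hg
end

section
/- Let F₂ = ⟨a, b⟩ be a free group of rank 2 acting freely on a set X. Then the unitary representation of F₂ on ℓ²(X) has no almost-invariant vectors: there exist a finite set S ⊆ F₂ and ε > 0 such that for every unit vector ξ ∈ ℓ²(X), max_{s∈S} ‖s·ξ − ξ‖ ≥ ε. -/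
open scoped Classical


abbrev G2 := FreeGroup (Fin 2)

def wA1 (g : G2) : Prop := g.toWord.head? = some (0, true) ∨ ∀ l ∈ g.toWord, l = ((0:Fin 2), false)
def wA2 (g : G2) : Prop := g.toWord.head? = some (0, false) ∧ ¬ ∀ l ∈ g.toWord, l = ((0:Fin 2), false)
def wB1 (g : G2) : Prop := g.toWord.head? = some (1, true)
def wB2 (g : G2) : Prop := g.toWord.head? = some (1, false)

lemma toWord_of_mul (i : Fin 2) (g : G2) :
    (FreeGroup.of i * g).toWord =
      (List.casesOn g.toWord [(i, true)] fun hd tl =>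
        if (i, true).1 = hd.1 ∧ (i, true).2 = !hd.2 then tl else (i, true) :: hd :: tl) := by
  conv_lhs => rw [← FreeGroup.mk_toWord (x := g)]
  rw [show (FreeGroup.of i : G2) = FreeGroup.mk [(i, true)] from rfl, FreeGroup.mul_mk,
    FreeGroup.toWord_mk, List.singleton_append, FreeGroup.reduce.cons, FreeGroup.reduce_toWord]

lemma no_cancel {g : G2} {x : Fin 2} {b : Bool} {tl : List (Fin 2 × Bool)}
    (h : g.toWord = (x, b) :: (x, !b) :: tl) : False := by
  exact FreeGroup.reduce.not (L₂ := []) ((FreeGroup.reduce_toWord g).trans h)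

lemma cover (g : G2) : wA1 g ∨ wA2 g ∨ wB1 g ∨ wB2 g := by
  rcases h : g.toWord with _ | ⟨⟨i, t⟩, tl⟩
  · exact Or.inl (Or.inr (by simp [h]))
  · fin_cases i <;> cases t
    · by_cases hN : ∀ l ∈ g.toWord, l = ((0:Fin 2), false)
      · exact Or.inl (Or.inr hN)
      · exact Or.inr (Or.inl ⟨by simp [h], hN⟩)
    · exact Or.inl (Or.inl (by simp [h]))
    · exact Or.inr (Or.inr (Or.inr (by simp [wB2, h])))
    · exact Or.inr (Or.inr (Or.inl (by simp [wB1, h])))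

lemma head_of_N {g : G2} (hN : ∀ l ∈ g.toWord, l = ((0:Fin 2), false)) {l} (h : g.toWord.head? = some l) :
    l = ((0:Fin 2), false) := by
  rcases hw : g.toWord with _ | ⟨hd, tl⟩
  · simp [hw] at h
  · rw [hw] at h; simp at h; subst h; exact hN _ (by simp [hw])

lemma disj12 (g : G2) : wA1 g → wA2 g → False := by
  rintro (h1 | h1) ⟨h2, h2'⟩
  · rw [h1] at h2; simp at h2
  · exact h2' h1
lemma disj13 (g : G2) : wA1 g → wB1 g → False := by
  rintro (h1 | h1) h2 <;> simp only [wB1] at h2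
  · rw [h1] at h2; simp at h2
  · have := head_of_N h1 h2; simp at this
lemma disj14 (g : G2) : wA1 g → wB2 g → False := by
  rintro (h1 | h1) h2 <;> simp only [wB2] at h2
  · rw [h1] at h2; simp at h2
  · have := head_of_N h1 h2; simp at this
lemma disj23 (g : G2) : wA2 g → wB1 g → False := by
  rintro ⟨h1, _⟩ h2; simp only [wB1] at h2; rw [h1] at h2; simp at h2
lemma disj24 (g : G2) : wA2 g → wB2 g → False := by
  rintro ⟨h1, _⟩ h2; simp only [wB2] at h2; rw [h1] at h2; simp at h2
lemma disj34 (g : G2) : wB1 g → wB2 g → False := by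
  intro h1 h2; simp only [wB1, wB2] at *; rw [h1] at h2; simp at h2

lemma Ka (g : G2) : wA1 (FreeGroup.of 0 * g) ↔ ¬ wA2 g := by
  have hm := toWord_of_mul 0 g
  rcases hw : g.toWord with _ | ⟨⟨i, t⟩, tl⟩
  · rw [hw] at hm
    simp only [wA1, wA2, hm, hw]
    simp
  · rw [hw] at hm
    dsimp only at hm
    by_cases hc : (0 : Fin 2) = i ∧ (true : Bool) = !t
    · obtain ⟨hi, ht⟩ := hc
      have ht' : t = false := by revert ht; cases t <;> simp
      subst hi; subst ht'
      rw [if_pos ⟨rfl, rfl⟩] at hm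
      constructor
      · rintro (h | h)
        · rw [hm] at h
          rcases htl : tl with _ | ⟨l, tl'⟩
          · rw [htl] at h; simp at h
          · rw [htl] at h; simp at h; subst h
            exact (no_cancel (b := false) (show FreeGroup.toWord g = ((0:Fin 2), false) :: ((0:Fin 2), !false) :: tl' by rw [hw, htl]; rfl)).elim
        · rw [hm] at h
          rintro ⟨_, hN⟩
          refine hN ?_
          intro l hl; rw [hw] at hl
          rcases List.mem_cons.1 hl with h1 | h1
          · exact h1
          · exact h l h1
      · intro h
        have hN : ∀ l ∈ g.toWord, l = ((0:Fin 2), false) := by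
          by_contra hN; exact h ⟨by simp [hw], hN⟩
        right; rw [hm]; intro l hl
        exact hN l (by rw [hw]; exact List.mem_cons_of_mem _ hl)
    · rw [if_neg hc] at hm
      constructor
      · rintro _ ⟨hhd, _⟩; rw [hw] at hhd; simp at hhd
        obtain ⟨h1, h2⟩ := hhd; subst h1; subst h2; exact hc ⟨rfl, rfl⟩
      · intro _; left; rw [hm]; simp

lemma Kb (g : G2) : wB1 (FreeGroup.of 1 * g) ↔ ¬ wB2 g := by
  have hm := toWord_of_mul 1 g
  rcases hw : g.toWord with _ | ⟨⟨i, t⟩, tl⟩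
  · rw [hw] at hm
    simp only [wB1, wB2, hm, hw]
    simp
  · rw [hw] at hm
    dsimp only at hm
    by_cases hc : (1 : Fin 2) = i ∧ (true : Bool) = !t
    · obtain ⟨hi, ht⟩ := hc
      have ht' : t = false := by revert ht; cases t <;> simp
      subst hi; subst ht'
      rw [if_pos ⟨rfl, rfl⟩] at hm
      simp only [wB1, wB2, hm, hw]
      constructor
      · intro h
        rcases htl : tl with _ | ⟨l, tl'⟩
        · rw [htl] at h; simp at h
        · rw [htl] at h; simp at h; subst h
          exact (no_cancel (b := false) (show FreeGroup.toWord g = ((1:Fin 2), false) :: ((1:Fin 2), !false) :: tl' by rw [hw, htl]; rfl)).elim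
      · intro h; exact absurd rfl h
    · rw [if_neg hc]  at hm
      simp only [wB1, wB2, hm, hw]
      constructor
      · intro _ h; simp at h
        obtain ⟨h1, h2⟩ := h; subst h1; subst h2; exact hc ⟨rfl, rfl⟩
      · intro _; simp


lemma exists_equivariant_label {X : Type*} [MulAction G2 X]
    (hfree : ∀ (g : G2) (x : X), g • x = x → g = 1) :
    ∃ w : X → G2, ∀ (g : G2) (x : X), w (g • x) = g * w x := by
  classical
  letI s := MulAction.orbitRel G2 X
  have hrx : ∀ x : X, ∃ g : G2, g • (Quotient.mk s x).out = x := by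
    intro x
    have h1 : s (Quotient.mk s x).out x := Quotient.mk_out x
    rw [MulAction.orbitRel_apply] at h1
    obtain ⟨g, hg⟩ := h1
    exact ⟨g⁻¹, by rw [← hg]; exact inv_smul_smul g x⟩
  choose w hw using hrx
  refine ⟨w, ?_⟩
  intro g x
  have hq : Quotient.mk s (g • x) = Quotient.mk s x :=
    Quotient.sound (MulAction.orbitRel_apply.mpr (MulAction.mem_orbit x g))
  have hout : (Quotient.mk s (g • x)).out = (Quotient.mk s x).out := congrArg Quotient.out hq
  have h3 : ((w (g • x))⁻¹ * (g * w x)) • (Quotient.mk s x).out = (Quotient.mk s x).out := by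
    calc ((w (g • x))⁻¹ * (g * w x)) • (Quotient.mk s x).out
        = (w (g • x))⁻¹ • ((g * w x) • (Quotient.mk s x).out) := mul_smul _ _ _
      _ = (w (g • x))⁻¹ • (g • (w x • (Quotient.mk s x).out)) := by rw [mul_smul]
      _ = (w (g • x))⁻¹ • (g • x) := by rw [hw x]
      _ = (w (g • x))⁻¹ • (w (g • x) • (Quotient.mk s (g • x)).out) :=
          congrArg _ (hw (g • x)).symm
      _ = (Quotient.mk s (g • x)).out := inv_smul_smul _ _
      _ = (Quotient.mk s x).out := hout
  have h4 := hfree _ _ h3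
  rw [inv_mul_eq_one] at h4
  exact h4


section Analysis
variable {Y : Type*}

lemma sq_conv (u : Y → ℂ) :
    (fun x => ‖u x‖ ^ ((2 : ENNReal)).toReal) = fun x => ‖u x‖ ^ 2 := by
  funext x
  rw [show ((2 : ENNReal)).toReal = ((2 : ℕ) : ℝ) by norm_num, Real.rpow_natCast]

lemma lp_norm_eq (F : lp (fun _ : Y => ℂ) 2) :
    ‖F‖ = Real.sqrt (∑' x, ‖F x‖ ^ 2) := by
  rw [lp.norm_eq_tsum_rpow (by norm_num) F]
  rw [show (∑' x, ‖F x‖ ^ ((2:ENNReal)).toReal) = ∑' x, ‖F x‖ ^ 2 by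
    exact congrArg tsum (sq_conv (fun x => F x))]
  rw [Real.sqrt_eq_rpow]
  norm_num

lemma sqrt_tsum_triangle (f h : Y → ℂ)
    (hf : Summable fun x => ‖f x‖ ^ 2) (hh : Summable fun x => ‖h x‖ ^ 2) :
    Real.sqrt (∑' x, ‖f x‖ ^ 2) ≤
      Real.sqrt (∑' x, ‖h x‖ ^ 2) + Real.sqrt (∑' x, ‖f x - h x‖ ^ 2) := by
  have hfm : Memℓp f 2 := memℓp_gen (by rw [sq_conv]; exact hf)
  have hhm : Memℓp h 2 := memℓp_gen (by rw [sq_conv]; exact hh)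
  set F : lp (fun _ : Y => ℂ) 2 := ⟨f, hfm⟩
  set H : lp (fun _ : Y => ℂ) 2 := ⟨h, hhm⟩
  have h1 : ‖F‖ ≤ ‖H‖ + ‖F - H‖ := by
    have := norm_add_le H (F - H)
    rwa [add_sub_cancel] at this
  have hFc : ∀ x, F x = f x := fun x => rfl
  have hHc : ∀ x, H x = h x := fun x => rfl
  have hD : ∀ x, (F - H) x = f x - h x := fun x => by
    rw [lp.coeFn_sub]; simp [hFc, hHc]
  rw [lp_norm_eq, lp_norm_eq, lp_norm_eq] at h1
  simp only [hFc, hHc, hD] at h1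
  exact h1

/-- indicator square sum -/
noncomputable def ind (P : Y → Prop) (f : Y → ℂ) : Y → ℝ :=
  fun x => if P x then ‖f x‖ ^ 2 else 0

lemma ind_nonneg (P : Y → Prop) (f : Y → ℂ) (x : Y) : 0 ≤ ind P f x := by
  unfold ind; split_ifs
  · positivity
  · exact le_rfl

lemma ind_le (P : Y → Prop) (f : Y → ℂ) (x : Y) : ind P f x ≤ ‖f x‖ ^ 2 := by
  unfold ind; split_ifs
  · exact le_rfl
  · positivity

lemma ind_summable (P : Y → Prop) (f : Y → ℂ) (hf : Summable fun x => ‖f x‖ ^ 2) :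
    Summable (ind P f) :=
  Summable.of_nonneg_of_le (ind_nonneg P f) (ind_le P f) hf

lemma ind_tsum_le_one (P : Y → Prop) (f : Y → ℂ) (hf : Summable fun x => ‖f x‖ ^ 2)
    (hf1 : ∑' x, ‖f x‖ ^ 2 = 1) : ∑' x, ind P f x ≤ 1 := by
  rw [← hf1]
  exact Summable.tsum_le_tsum (ind_le P f) (ind_summable P f hf) hf

lemma ind_tsum_nonneg (P : Y → Prop) (f : Y → ℂ) : 0 ≤ ∑' x, ind P f x :=
  tsum_nonneg (ind_nonneg P f)

lemma ind_split (P : Y → Prop) (f : Y → ℂ) (hf : Summable fun x => ‖f x‖ ^ 2) :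
    (∑' x, ind P f x) + (∑' x, ind (fun x => ¬ P x) f x) = ∑' x, ‖f x‖ ^ 2 := by
  rw [← Summable.tsum_add (ind_summable P f hf) (ind_summable _ f hf)]
  refine tsum_congr fun x => ?_
  unfold ind
  by_cases h : P x <;> simp [h]

/-- Minkowski comparison over an indicator set. -/
lemma ind_sqrt_le (P : Y → Prop) (f h : Y → ℂ)
    (hf : Summable fun x => ‖f x‖ ^ 2) (hh : Summable fun x => ‖h x‖ ^ 2)
    (hfh : Summable fun x => ‖f x - h x‖ ^ 2) :
    Real.sqrt (∑' x, ind P f x) ≤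
      Real.sqrt (∑' x, ind P h x) + Real.sqrt (∑' x, ‖f x - h x‖ ^ 2) := by
  set u : Y → ℂ := fun x => if P x then f x else 0 with hu
  set v : Y → ℂ := fun x => if P x then h x else 0 with hv
  have hun : ∀ x, ‖u x‖ ^ 2 = ind P f x := fun x => by
    by_cases hP : P x <;> simp [hu, ind, hP]
  have hvn : ∀ x, ‖v x‖ ^ 2 = ind P h x := fun x => by
    by_cases hP : P x <;> simp [hv, ind, hP]
  have huvn : ∀ x, ‖u x - v x‖ ^ 2 = ind P (fun y => f y - h y) x := fun x => by
    by_cases hP : P x <;> simp [hu, hv, ind, hP]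
  have hus : Summable fun x => ‖u x‖ ^ 2 := by
    simp only [hun]; exact ind_summable P f hf
  have hvs : Summable fun x => ‖v x‖ ^ 2 := by
    simp only [hvn]; exact ind_summable P h hh
  have key := sqrt_tsum_triangle u v hus hvs
  simp only [hun, hvn, huvn] at key
  refine key.trans (add_le_add le_rfl (Real.sqrt_le_sqrt ?_))
  exact Summable.tsum_le_tsum (ind_le P _) (ind_summable P _ hfh) hfh

end Analysis


lemma gen_ineq {X : Type*} [MulAction G2 X] (w : X → G2)
    (hw : ∀ (g : G2) (x : X), w (g • x) = g * w x)
    (P1 P2 : G2 → Prop) (c : G2) (hK : ∀ g : G2, P1 (c * g) ↔ ¬ P2 g)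
    (ξ : X → ℂ) (hξ : Summable fun x => ‖ξ x‖ ^ 2) (hξ1 : ∑' x, ‖ξ x‖ ^ 2 = 1) :
    1 ≤ (∑' x, ind (fun x => P1 (w x)) ξ x) + (∑' x, ind (fun x => P2 (w x)) ξ x)
        + (2 * Real.sqrt (∑' x, ‖ξ (c • x) - ξ x‖ ^ 2)
           + Real.sqrt (∑' x, ‖ξ (c • x) - ξ x‖ ^ 2) ^ 2) := by
  set η : X → ℂ := fun x => ξ (c • x) with hη
  have hηs : Summable fun x => ‖η x‖ ^ 2 := by
    have he : (fun x => ‖η x‖ ^ 2)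
        = (fun x => ‖ξ x‖ ^ 2) ∘ (MulAction.toPerm c : Equiv.Perm X) := rfl
    rw [he]; exact (Equiv.summable_iff _).mpr hξ
  have hδs : Summable fun x => ‖η x - ξ x‖ ^ 2 := by
    refine Summable.of_nonneg_of_le (fun x => by positivity)
      (fun x => ?_) (((hηs.add hξ)).mul_left 2)
    have h1 := norm_sub_le (η x) (ξ x)
    have h2 : ‖η x - ξ x‖ ^ 2 ≤ (‖η x‖ + ‖ξ x‖) ^ 2 :=
      pow_le_pow_left₀ (norm_nonneg _) h1 2
    nlinarith [sq_nonneg (‖η x‖ - ‖ξ x‖)]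
  set δ := Real.sqrt (∑' x, ‖η x - ξ x‖ ^ 2) with hδ
  have hsplit := ind_split (fun x => P1 (w x)) ξ hξ
  rw [hξ1] at hsplit
  have hre : (∑' x, ind (fun x => ¬ P1 (w x)) ξ x)
      = ∑' x, ind (fun x => P2 (w x)) η x := by
    rw [← Equiv.tsum_eq (MulAction.toPerm c : Equiv.Perm X) (ind (fun x => ¬ P1 (w x)) ξ)]
    refine tsum_congr fun x => ?_
    show ind (fun x => ¬ P1 (w x)) ξ (c • x) = ind (fun x => P2 (w x)) η x
    have hiff : (¬ P1 (w (c • x))) ↔ P2 (w x) := by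
      rw [hw c x]
      constructor
      · intro h; by_contra h2; exact h ((hK (w x)).mpr h2)
      · intro h h2; exact ((hK (w x)).mp h2) h
    unfold ind
    by_cases h2 : P2 (w x)
    · rw [if_pos (hiff.mpr h2), if_pos h2]
    · rw [if_neg (fun hh => h2 (hiff.mp hh)), if_neg h2]
  have hcmp := ind_sqrt_le (fun x => P2 (w x)) η ξ hηs hξ hδs
  set A := ∑' x, ind (fun x => P2 (w x)) ξ x with hA
  set B := ∑' x, ind (fun x => P2 (w x)) η x with hB
  have hA1 : A ≤ 1 := ind_tsum_le_one _ ξ hξ hξ1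
  have hA0 : 0 ≤ A := ind_tsum_nonneg _ ξ
  have hB0 : 0 ≤ B := ind_tsum_nonneg _ η
  have hd0 : 0 ≤ δ := Real.sqrt_nonneg _
  have hBA : B ≤ A + (2 * δ + δ ^ 2) := by
    have hsA1 : Real.sqrt A ≤ 1 := Real.sqrt_le_one.mpr hA1
    nlinarith [Real.sq_sqrt hA0, Real.sq_sqrt hB0, Real.sqrt_nonneg A, Real.sqrt_nonneg B,
      sq_nonneg (Real.sqrt A + δ - Real.sqrt B), hcmp]
  linarith [hsplit, hre ▸ hBA]

/-- If the free group `F₂` of rank 2 acts freely on a set `X`, then the permutation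
representation of `F₂` on `ℓ²(X)` has no almost-invariant vectors: there are a finite set
`S ⊆ F₂` and `ε > 0` such that every unit vector `ξ ∈ ℓ²(X)` is moved by at least `ε` by
some `s ∈ S`. -/
theorem stmt6 {X : Type*} [MulAction (FreeGroup (Fin 2)) X]
    (hfree : ∀ (g : FreeGroup (Fin 2)) (x : X), g • x = x → g = 1) :
    ∃ (S : Finset (FreeGroup (Fin 2))) (ε : ℝ), 0 < ε ∧
      ∀ ξ : X → ℂ, Summable (fun x => ‖ξ x‖ ^ 2) →
        ∑' x, ‖ξ x‖ ^ 2 = 1 →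
        ∃ s ∈ S, ε ≤ Real.sqrt (∑' x, ‖ξ (s⁻¹ • x) - ξ x‖ ^ 2) := by
  obtain ⟨w, hw⟩ := exists_equivariant_label hfree
  refine ⟨{(FreeGroup.of (0 : Fin 2))⁻¹, (FreeGroup.of (1 : Fin 2))⁻¹}, 1/5, by norm_num, ?_⟩
  intro ξ hξ hξ1
  by_contra hcon
  push_neg at hcon
  have hδa : Real.sqrt (∑' x, ‖ξ (FreeGroup.of (0 : Fin 2) • x) - ξ x‖ ^ 2) < 1/5 := by
    have := hcon (FreeGroup.of (0 : Fin 2))⁻¹ (by simp)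
    simpa using this
  have hδb : Real.sqrt (∑' x, ‖ξ (FreeGroup.of (1 : Fin 2) • x) - ξ x‖ ^ 2) < 1/5 := by
    have := hcon (FreeGroup.of (1 : Fin 2))⁻¹ (by simp)
    simpa using this
  have ha := gen_ineq w hw wA1 wA2 (FreeGroup.of (0 : Fin 2)) Ka ξ hξ hξ1
  have hb := gen_ineq w hw wB1 wB2 (FreeGroup.of (1 : Fin 2)) Kb ξ hξ hξ1
  have hda0 : (0:ℝ) ≤ Real.sqrt (∑' x, ‖ξ (FreeGroup.of (0 : Fin 2) • x) - ξ x‖ ^ 2) :=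
    Real.sqrt_nonneg _
  have hdb0 : (0:ℝ) ≤ Real.sqrt (∑' x, ‖ξ (FreeGroup.of (1 : Fin 2) • x) - ξ x‖ ^ 2) :=
    Real.sqrt_nonneg _
  have hsplit4 : (∑' x, ind (fun x => wA1 (w x)) ξ x) + (∑' x, ind (fun x => wA2 (w x)) ξ x)
      + (∑' x, ind (fun x => wB1 (w x)) ξ x) + (∑' x, ind (fun x => wB2 (w x)) ξ x) = 1 := by
    rw [← Summable.tsum_add (ind_summable _ ξ hξ) (ind_summable _ ξ hξ),
      ← Summable.tsum_add ((ind_summable _ ξ hξ).add (ind_summable _ ξ hξ)) (ind_summable _ ξ hξ),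
      ← Summable.tsum_add (((ind_summable _ ξ hξ).add (ind_summable _ ξ hξ)).add (ind_summable _ ξ hξ))
        (ind_summable _ ξ hξ), ← hξ1]
    refine tsum_congr fun x => ?_
    unfold ind
    rcases cover (w x) with h | h | h | h
    · rw [if_pos h, if_neg (fun h2 => disj12 _ h h2), if_neg (fun h2 => disj13 _ h h2),
        if_neg (fun h2 => disj14 _ h h2)]; ring
    · rw [if_neg (fun h1 => disj12 _ h1 h), if_pos h, if_neg (fun h2 => disj23 _ h h2),
        if_neg (fun h2 => disj24 _ h h2)]; ring
    · rw [if_neg (fun h1 => disj13 _ h1 h), if_neg (fun h1 => disj23 _ h1 h), if_pos h,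
        if_neg (fun h2 => disj34 _ h h2)]; ring
    · rw [if_neg (fun h1 => disj14 _ h1 h), if_neg (fun h1 => disj24 _ h1 h),
        if_neg (fun h1 => disj34 _ h1 h), if_pos h]; ring
  nlinarith [ha, hb, hsplit4, hδa, hδb, hda0, hdb0]
end

section
/- Let Γ be a group, θ an automorphism of Γ, G = Γ ⋊_θ ℤ with stable letter t, and M a unitary G-module. Assume the map ι: M^Γ → M^Γ, m ↦ (1 − t⁻¹)m, governs H¹: H¹(G,M) = 0 iff ι is onto, and H̄¹(G,M) = 0 iff ι has dense image. Then: (i) H¹(G, M) = 0 if and only if 1 is not a spectral value of the unitary operator t|_{M^Γ}; (ii) H̄¹(G, M) = 0 if and only if 1 is not an eigenvalue of t|_{M^Γ}. -/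
open scoped InnerProductSpace

/-- Let `G = Γ ⋊_θ ℤ` with stable letter `t`, `M` a unitary `G`-module, and
`S = M^Γ` the subspace of `Γ`-invariant vectors. Assume the map `ι : m ↦ (1 − t⁻¹)m` on `S`
governs 1-cohomology: `H¹(G,M) = 0` (`P`) iff `ι` is onto, and `H̄¹(G,M) = 0` (`Q`) iff `ι`
has dense image. Then: (i) `P` iff `1` is not a spectral value of `t|_S` (i.e. `1 − t` is
bijective on `S`); (ii) `Q` iff `1` is not an eigenvalue of `t|_S`. -/
theorem stmt9 {Γ M : Type*} [Group Γ] [NormedAddCommGroup M] [InnerProductSpace ℂ M]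
    [CompleteSpace M] (θ : MulAut Γ)
    (π : (Γ ⋊[zpowersHom (MulAut Γ) θ] Multiplicative ℤ) →* (M ≃ₗᵢ[ℂ] M))
    (t : Γ ⋊[zpowersHom (MulAut Γ) θ] Multiplicative ℤ)
    (ht : t = SemidirectProduct.inr (Multiplicative.ofAdd 1))
    (S : Set M) (hS : S = {m : M | ∀ γ : Γ, π (SemidirectProduct.inl γ) m = m})
    (P Q : Prop)
    (hP : P ↔ (∀ m ∈ S, ∃ n ∈ S, n - π t⁻¹ n = m))
    (hQ : Q ↔ (∀ m ∈ S, ∀ ε : ℝ, 0 < ε → ∃ n ∈ S, ‖n - π t⁻¹ n - m‖ < ε)) :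
    (P ↔ (∀ m ∈ S, ∃! n, n ∈ S ∧ n - π t n = m)) ∧
    (Q ↔ (∀ m ∈ S, π t m = m → m = 0)) := by
  -- basic operator identities
  have hmul : ∀ (a b : Γ ⋊[zpowersHom (MulAut Γ) θ] Multiplicative ℤ) (x : M),
      π (a * b) x = π a (π b x) := fun a b x => by rw [map_mul]; rfl
  have hinv : ∀ x : M, π t (π t⁻¹ x) = x := fun x => by
    rw [← hmul, mul_inv_cancel, map_one]; rfl
  have hinv' : ∀ x : M, π t⁻¹ (π t x) = x := fun x => by
    rw [← hmul, inv_mul_cancel, map_one]; rfl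
  have hip : ∀ x y : M, ⟪π t x, π t y⟫_ℂ = ⟪x, y⟫_ℂ := fun x y =>
    (π t).inner_map_map x y
  have hip' : ∀ x y : M, ⟪π t⁻¹ x, y⟫_ℂ = ⟪x, π t y⟫_ℂ := fun x y => by
    rw [← hip (π t⁻¹ x) y, hinv]
  -- invariance of S under t and t⁻¹
  have hmemS : ∀ m : M, m ∈ S ↔ ∀ γ : Γ, π (SemidirectProduct.inl γ) m = m := by
    intro m; rw [hS]; rfl
  have hSt : ∀ m ∈ S, π t m ∈ S := by
    intro m hm
    rw [hmemS] at hm ⊢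
    intro γ
    have hconj : (SemidirectProduct.inl γ) * t
        = t * SemidirectProduct.inl (((zpowersHom (MulAut Γ) θ) (Multiplicative.ofAdd 1))⁻¹ γ) := by
      rw [ht, SemidirectProduct.inl_aut_inv]
      simp [mul_assoc, ← map_mul, ← map_zpow]
    rw [← hmul, hconj, hmul, hm]
  have hSt' : ∀ m ∈ S, π t⁻¹ m ∈ S := by
    intro m hm
    rw [hmemS] at hm ⊢
    intro γ
    have hconj : (SemidirectProduct.inl γ) * t⁻¹
        = t⁻¹ * SemidirectProduct.inl (((zpowersHom (MulAut Γ) θ) (Multiplicative.ofAdd 1)) γ) := by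
      rw [ht, SemidirectProduct.inl_aut]
      simp [mul_assoc, ← map_mul, ← map_zpow]
    rw [← hmul, hconj, hmul, hm]
  -- S as a submodule
  set T : Submodule ℂ M :=
    { carrier := S
      add_mem' := by
        intro a b ha hb
        rw [hmemS] at ha hb ⊢
        intro γ; rw [map_add, ha, hb]
      zero_mem' := by
        rw [hmemS]; intro γ; exact map_zero _
      smul_mem' := by
        intro c x hx
        rw [hmemS] at hx ⊢
        intro γ; rw [map_smul, hx] } with hT
  have hTS : ∀ m : M, m ∈ T ↔ m ∈ S := fun m => Iff.rfl
  have hTclosed : IsClosed (T : Set M) := by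
    have : (T : Set M) = ⋂ γ : Γ, {m : M | π (SemidirectProduct.inl γ) m = m} := by
      ext m
      simp only [Set.mem_iInter, Set.mem_setOf_eq]
      exact (hmemS m)
    rw [this]
    exact isClosed_iInter fun γ =>
      isClosed_eq (π (SemidirectProduct.inl γ)).continuous continuous_id
  constructor
  · -- part (i)
    rw [hP]
    constructor
    · intro h m hm
      -- existence
      have hm' : -(π t⁻¹ m) ∈ S := (hTS _).1 (T.neg_mem ((hTS _).2 (hSt' m hm)))
      obtain ⟨n, hn, hne⟩ := h _ hm'
      refine ⟨n, ⟨hn, ?_⟩, ?_⟩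
      · have : π t (n - π t⁻¹ n) = π t (-(π t⁻¹ m)) := by rw [hne]
        rw [map_sub, hinv, map_neg, hinv] at this
        rw [← neg_sub, this, neg_neg]
      · -- uniqueness
        rintro n' ⟨hn', hne'⟩
        set d := n' - n with hd
        have hdS : d ∈ S := (hTS _).1 (T.sub_mem ((hTS _).2 hn') ((hTS _).2 hn))
        have htd : π t d = d := by
          have h1 : n - π t n = m := by
            have : π t (n - π t⁻¹ n) = π t (-(π t⁻¹ m)) := by rw [hne]
            rw [map_sub, hinv, map_neg, hinv] at this
            rw [← neg_sub, this, neg_neg]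
          have : n' - π t n' - (n - π t n) = 0 := by rw [hne', h1, sub_self]
          have h2 : d - π t d = 0 := by
            rw [hd, map_sub]; rw [← this]; abel
          have := sub_eq_zero.mp h2
          exact this.symm
        obtain ⟨n₀, hn₀, hn₀e⟩ := h d hdS
        have : ⟪d, d⟫_ℂ = 0 := by
          calc ⟪d, d⟫_ℂ = ⟪d, n₀ - π t⁻¹ n₀⟫_ℂ := by rw [hn₀e]
            _ = ⟪d, n₀⟫_ℂ - ⟪d, π t⁻¹ n₀⟫_ℂ := inner_sub_right _ _ _
            _ = 0 := by
                have : ⟪d, π t⁻¹ n₀⟫_ℂ = ⟪d, n₀⟫_ℂ := by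
                  rw [← hip d (π t⁻¹ n₀), hinv, htd]
                rw [this, sub_self]
        have hd0 : d = 0 := inner_self_eq_zero.mp this
        exact sub_eq_zero.mp hd0
    · intro h m hm
      have hm' : -(π t m) ∈ S := (hTS _).1 (T.neg_mem ((hTS _).2 (hSt m hm)))
      obtain ⟨n, ⟨hn, hne⟩, _⟩ := h _ hm'
      refine ⟨n, hn, ?_⟩
      have : π t⁻¹ (n - π t n) = π t⁻¹ (-(π t m)) := by rw [hne]
      rw [map_sub, hinv', map_neg, hinv'] at this
      rw [← neg_sub, this, neg_neg]
  · -- part (ii)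
    rw [hQ]
    constructor
    · intro h m hm htm
      by_contra hm0
      have hnorm : (0 : ℝ) < ‖m‖ := norm_pos_iff.2 hm0
      obtain ⟨n, hn, hlt⟩ := h m hm ‖m‖ hnorm
      have horth : ⟪n - π t⁻¹ n, m⟫_ℂ = 0 := by
        rw [inner_sub_left]
        have : ⟪π t⁻¹ n, m⟫_ℂ = ⟪n, m⟫_ℂ := by rw [hip', htm]
        rw [this, sub_self]
      have key : ⟪m - (n - π t⁻¹ n), m⟫_ℂ = ⟪m, m⟫_ℂ := by
        rw [inner_sub_left, horth, sub_zero]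
      have h1 : ‖m‖ * ‖m‖ = ‖⟪m, m⟫_ℂ‖ := by
        rw [inner_self_eq_norm_sq_to_K (𝕜 := ℂ) m]
        rw [norm_pow]
        simp [pow_two]
      have h2 : ‖⟪m - (n - π t⁻¹ n), m⟫_ℂ‖ ≤ ‖m - (n - π t⁻¹ n)‖ * ‖m‖ :=
        norm_inner_le_norm _ _
      have h3 : ‖m - (n - π t⁻¹ n)‖ < ‖m‖ := by
        rw [norm_sub_rev]; exact hlt
      have : ‖m‖ * ‖m‖ < ‖m‖ * ‖m‖ := by
        calc ‖m‖ * ‖m‖ = ‖⟪m - (n - π t⁻¹ n), m⟫_ℂ‖ := by rw [key, ← h1]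
          _ ≤ ‖m - (n - π t⁻¹ n)‖ * ‖m‖ := h2
          _ < ‖m‖ * ‖m‖ := mul_lt_mul_of_pos_right h3 hnorm
      exact lt_irrefl _ this
    · intro h m hm ε hε
      -- range submodule
      set f : M →ₗ[ℂ] M := LinearMap.id - (π t⁻¹).toLinearEquiv.toLinearMap with hf
      have hfval : ∀ x : M, f x = x - π t⁻¹ x := fun x => rfl
      set R : Submodule ℂ M := T.map f with hR
      have hRT : R ≤ T := by
        rintro x ⟨y, hy, rfl⟩
        rw [hfval]
        exact T.sub_mem hy ((hTS _).2 (hSt' y ((hTS _).1 hy)))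
      set K : Submodule ℂ M := R.topologicalClosure with hK
      have hKT : K ≤ T := R.topologicalClosure_minimal hRT hTclosed
      haveI : CompleteSpace K := R.isClosed_topologicalClosure.completeSpace_coe
      obtain ⟨p, hp, q, hq, hmpq⟩ := K.exists_add_mem_mem_orthogonal m
      have hqS : q ∈ S := by
        have : q = m - p := by rw [hmpq]; abel
        rw [this]
        exact (hTS _).1 (T.sub_mem ((hTS _).2 hm) (hKT hp))
      -- q is fixed by t
      have hqfix : π t q = q := by
        have horth : ∀ n ∈ S, ⟪n, q - π t q⟫_ℂ = 0 := by
          intro n hnS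
          have hr : (n - π t⁻¹ n) ∈ K :=
            R.le_topologicalClosure ⟨n, (hTS _).2 hnS, (hfval n)⟩
          have h0 : ⟪n - π t⁻¹ n, q⟫_ℂ = 0 :=
            Submodule.inner_right_of_mem_orthogonal hr hq
          rw [inner_sub_left] at h0
          have h1 : ⟪π t⁻¹ n, q⟫_ℂ = ⟪n, π t q⟫_ℂ := hip' n q
          rw [h1] at h0
          rw [inner_sub_right]
          linear_combination h0
        have hqq : (q - π t q) ∈ S :=
          (hTS _).1 (T.sub_mem ((hTS _).2 hqS) ((hTS _).2 (hSt q hqS)))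
        have := horth _ hqq
        have h0 : q - π t q = 0 := inner_self_eq_zero.mp this
        have := sub_eq_zero.mp h0
        exact this.symm
      have hq0 : q = 0 := h q hqS hqfix
      have hmK : m ∈ K := by rw [hmpq, hq0, add_zero]; exact hp
      -- m is in the closure of R
      have hmcl : m ∈ closure (R : Set M) := hmK
      obtain ⟨r, hrR, hrd⟩ := Metric.mem_closure_iff.mp hmcl ε hε
      obtain ⟨n, hnT, hfn⟩ := hrR
      refine ⟨n, (hTS _).1 hnT, ?_⟩
      rw [hfval] at hfn
      rw [hfn]
      rw [← dist_eq_norm, dist_comm]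
      exact hrd
end

section
/- Let G be a group generated by two subgroups G_v and G_u with a common finite subgroup G_e = G_v ∩ G_u, such that there exist g_v ∈ G_v \ G_e and g_u ∈ G_u \ G_e, and such that the elements (g_v g_u)ⁿ, n ∈ ℕ, are pairwise distinct and never lie in G_e for n ≥ 1. Then there is no pair f_v, f_u ∈ ℓ²(G) such that f_v is invariant under left translation by G_v (f_v(g_v' x) = f_v(x) for all g_v' ∈ G_v and x ∈ G), f_u is G_u-invariant, and f_v(x) − f_u(x) = χ_{G_e}(x) for all x ∈ G. -/
/-- Let `G` be generated by subgroups `G_v`, `G_u` with finite intersection `G_e = G_v ⊓ G_u`,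
and suppose `g_v ∈ G_v \ G_e`, `g_u ∈ G_u \ G_e` are such that the powers `(g_v g_u)ⁿ`
are pairwise distinct and lie outside `G_e` for `n ≥ 1`. Then there is no pair of
square-summable functions `f_v, f_u ∈ ℓ²(G)`, respectively invariant under left translation
by `G_v` and `G_u`, with `f_v(x) − f_u(x) = χ_{G_e}(x)` for all `x ∈ G`. -/
theorem stmt12 {G : Type*} [Group G] (Gv Gu : Subgroup G)
    (hgen : Gv ⊔ Gu = ⊤)
    (hfin : ((Gv ⊓ Gu : Subgroup G) : Set G).Finite)
    (gv gu : G) (hgv : gv ∈ Gv) (hgv' : gv ∉ Gv ⊓ Gu)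
    (hgu : gu ∈ Gu) (hgu' : gu ∉ Gv ⊓ Gu)
    (hdist : Function.Injective fun n : ℕ => (gv * gu) ^ n)
    (hnot : ∀ n : ℕ, n ≠ 0 → (gv * gu) ^ n ∉ Gv ⊓ Gu)
    (fv fu : G → ℂ)
    (hfv2 : Summable fun x => ‖fv x‖ ^ 2) (hfu2 : Summable fun x => ‖fu x‖ ^ 2)
    (hfvinv : ∀ h ∈ Gv, ∀ x : G, fv (h⁻¹ * x) = fv x)
    (hfuinv : ∀ h ∈ Gu, ∀ x : G, fu (h⁻¹ * x) = fu x)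
    (heq : ∀ x : G, fv x - fu x = Set.indicator ((Gv ⊓ Gu : Subgroup G) : Set G) 1 x) :
    False := by
  set c := gv * gu with hc
  -- key analytic lemma: a square-summable function vanishing of constant value on an
  -- injective sequence has that value zero
  have key : ∀ (f : G → ℂ), (Summable fun x => ‖f x‖ ^ 2) → ∀ (s : ℕ → G),
      Function.Injective s → ∀ v : ℂ, (∀ n, f (s n) = v) → v = 0 := by
    intro f hf s hs v hv
    have h1 : Summable ((fun x => ‖f x‖ ^ 2) ∘ s) := hf.comp_injective hs
    have h2 : Filter.Tendsto ((fun x => ‖f x‖ ^ 2) ∘ s) Filter.atTop (nhds 0) :=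
      h1.tendsto_atTop_zero
    have h3 : ((fun x => ‖f x‖ ^ 2) ∘ s) = fun _ => ‖v‖ ^ 2 := by
      funext n; simp [Function.comp, hv n]
    rw [h3] at h2
    have h4 : (0 : ℝ) = ‖v‖ ^ 2 := tendsto_nhds_unique h2 tendsto_const_nhds
    have h5 : ‖v‖ = 0 := by nlinarith [norm_nonneg v]
    exact norm_eq_zero.mp h5
  -- equality off the edge group
  have heq' : ∀ x : G, x ∉ Gv ⊓ Gu → fv x = fu x := by
    intro x hx
    have h := heq x
    rw [Set.indicator_of_notMem (by simpa using hx)] at h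
    linear_combination h
  have heq1 : ∀ x : G, x ∈ Gv ⊓ Gu → fv x - fu x = 1 := by
    intro x hx
    have h := heq x
    rwa [Set.indicator_of_mem (by simpa using hx)] at h
  -- fv(c) = fv(1) - 1
  have hfvc : fv c = fv 1 - 1 := by
    have e1 : fv c = fv gu := by
      have := hfvinv gv hgv c
      rw [show gv⁻¹ * c = gu by rw [hc]; group] at this
      exact this.symm
    have e2 : fv gu = fu gu := heq' gu hgu'
    have e3 : fu gu = fu 1 := by
      have := hfuinv gu hgu gu
      rw [inv_mul_cancel] at this
      exact this.symm
    have e4 : fv 1 - fu 1 = 1 := heq1 1 (one_mem _)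
    rw [e1, e2, e3]; linear_combination -e4
  -- fv is invariant under left multiplication by elements of Gv
  have hfv' : ∀ h ∈ Gv, ∀ x : G, fv (h * x) = fv x := by
    intro h hh x
    have := hfvinv h⁻¹ (inv_mem hh) x
    rwa [inv_inv] at this
  by_cases hcase : ∃ m : ℕ, m ≠ 0 ∧ c ^ m ∈ Gv
  · -- c^m ∈ Gv : fv is periodic along powers of c
    obtain ⟨m, hm0, hm⟩ := hcase
    have hper : ∀ (k : ℕ) (x : G), fv (c ^ (m * k) * x) = fv x := by
      intro k
      induction k with
      | zero => intro x; simp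
      | succ k ih =>
        intro x
        have harr : c ^ (m * (k + 1)) * x = c ^ m * (c ^ (m * k) * x) := by
          rw [Nat.mul_succ, pow_add, ← mul_assoc, pow_mul_comm]
        rw [harr, hfv' (c ^ m) hm, ih]
    have hv1 : fv 1 = 0 := by
      refine key fv hfv2 (fun k => c ^ (m * k) * 1) ?_ (fv 1) (fun k => hper k 1)
      intro a b hab
      simp only [mul_one] at hab
      have := hdist hab
      exact Nat.eq_of_mul_eq_mul_left (Nat.pos_of_ne_zero hm0) this
    have hvc : fv c = 0 := by
      refine key fv hfv2 (fun k => c ^ (m * k) * c) ?_ (fv c) (fun k => hper k c)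
      intro a b hab
      simp only at hab
      have hab' : c ^ (m * a) = c ^ (m * b) := mul_right_cancel hab
      have := hdist hab'
      exact Nat.eq_of_mul_eq_mul_left (Nat.pos_of_ne_zero hm0) this
    rw [hv1, hvc] at hfvc
    norm_num at hfvc
  · push_neg at hcase
    -- no positive power of c lies in Gv
    have hB : ∀ m : ℕ, m ≠ 0 → c ^ m ∉ Gv := hcase
    -- downward chain: fv((cⁿ)⁻¹) = fv 1
    have Hdown : ∀ n : ℕ, fv ((c ^ n)⁻¹) = fv 1 := by
      intro n
      induction n with
      | zero => simp
      | succ n ih =>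
        have hnotGe : (c ^ (n + 1))⁻¹ ∉ Gv ⊓ Gu := by
          intro h
          exact hnot (n + 1) (Nat.succ_ne_zero n) (by simpa using inv_mem h)
        have harr : (c ^ (n + 1))⁻¹ = gu⁻¹ * (gv⁻¹ * (c ^ n)⁻¹) := by
          rw [hc]; rw [pow_succ]; group
        have hy : gv⁻¹ * (c ^ n)⁻¹ ∉ Gv ⊓ Gu := by
          intro h
          rcases Nat.eq_zero_or_pos n with h0 | hpos
          · subst h0
            simp only [pow_zero, inv_one, mul_one] at h
            exact hgv' (by simpa using inv_mem h)
          · have hGv : gv⁻¹ * (c ^ n)⁻¹ ∈ Gv := h.1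
            have : (c ^ n)⁻¹ ∈ Gv := by
              have := Gv.mul_mem hgv hGv
              rwa [← mul_assoc, mul_inv_cancel, one_mul] at this
            exact hB n hpos.ne' (by simpa using inv_mem this)
        calc fv ((c ^ (n + 1))⁻¹) = fu ((c ^ (n + 1))⁻¹) := heq' _ hnotGe
          _ = fu (gv⁻¹ * (c ^ n)⁻¹) := by rw [harr]; exact hfuinv gu hgu _
          _ = fv (gv⁻¹ * (c ^ n)⁻¹) := (heq' _ hy).symm
          _ = fv ((c ^ n)⁻¹) := hfvinv gv hgv _
          _ = fv 1 := ih
    have hv1 : fv 1 = 0 := by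
      refine key fv hfv2 (fun n => (c ^ n)⁻¹) ?_ (fv 1) Hdown
      intro a b hab
      exact hdist (inv_injective hab)
    -- upward chain: fv(c^(n+1)) = fv c
    have Hup : ∀ n : ℕ, fv (c ^ (n + 1)) = fv c := by
      intro n
      induction n with
      | zero => simp
      | succ n ih =>
        have harr : gv⁻¹ * c ^ (n + 2) = gu * c ^ (n + 1) := by
          simp only [hc, pow_succ' (gv * gu) (n + 1)]
          simp [mul_assoc]
        have hy : gu * c ^ (n + 1) ∉ Gv ⊓ Gu := by
          intro h
          have hGv : gu * c ^ (n + 1) ∈ Gv := h.1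
          have : c ^ (n + 2) ∈ Gv := by
            have := Gv.mul_mem hgv hGv
            rwa [← mul_assoc, show gv * gu * c ^ (n+1) = c ^ (n + 2) by
              rw [← hc, ← pow_succ']] at this
          exact hB (n + 2) (Nat.succ_ne_zero _) this
        calc fv (c ^ (n + 2)) = fv (gv⁻¹ * c ^ (n + 2)) := (hfvinv gv hgv _).symm
          _ = fv (gu * c ^ (n + 1)) := by rw [harr]
          _ = fu (gu * c ^ (n + 1)) := heq' _ hy
          _ = fu (c ^ (n + 1)) := by
              have := hfuinv gu hgu (gu * c ^ (n + 1))
              rw [← mul_assoc, inv_mul_cancel, one_mul] at this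
              exact this.symm
          _ = fv (c ^ (n + 1)) := (heq' _ (hnot (n + 1) (Nat.succ_ne_zero n))).symm
          _ = fv c := ih
    have hvc : fv c = 0 := by
      refine key fv hfv2 (fun n => c ^ (n + 1)) ?_ (fv c) Hup
      intro a b hab
      simpa using hdist hab
    rw [hv1, hvc] at hfvc
    norm_num at hfvc
end
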